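/- For every multi-index α ∈ ℕ³ and every t ∈ (0, t₀], the weighted energy E_α(t) := (1/2) ∫_{[0,1]³} [ t² (∂_t∂_x^α ψ)²(t,x) + Σ_{i=1}^{3} t^{2−2pᵢ} (∂_{x_i}∂_x^α ψ)²(t,x) ] dx satisfies E_α(t) ≤ E_α(t₀). -/

import Mathlib

noncomputable section

open MeasureTheory Filter Set

/-- Spatial partial derivative `∂_{x_i}` in the `i`-th coordinate direction. -/
def pd (i : Fin 3) (f : (Fin 3 → ℝ) → ℝ) (x : Fin 3 → ℝ) : ℝ :=
  deriv (fun s => f (Function.update x i s)) (x i)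

/-- Iterated spatial derivative `∂_x^α` for a multi-index `α ∈ ℕ³`. -/
def pdMulti (α : Fin 3 → ℕ) (f : (Fin 3 → ℝ) → ℝ) : (Fin 3 → ℝ) → ℝ :=
  (pd 0)^[α 0] ((pd 1)^[α 1] ((pd 2)^[α 2] f))

/-- Time derivative `∂_t`. -/
def dtd (ψ : ℝ → (Fin 3 → ℝ) → ℝ) : ℝ → (Fin 3 → ℝ) → ℝ :=
  fun t x => deriv (fun s => ψ s x) t

/-- `ℤ³`-periodicity of a function on `ℝ³`. -/
def ZPeriodic (f : (Fin 3 → ℝ) → ℝ) : Prop :=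
  ∀ (x : Fin 3 → ℝ) (k : Fin 3 → ℤ), f (x + fun i => (k i : ℝ)) = f x

/-- Smoothness of `ψ` on `(0,∞) × ℝ³`. -/
def SmoothOnPos (ψ : ℝ → (Fin 3 → ℝ) → ℝ) : Prop :=
  ContDiffOn ℝ (⊤ : ℕ∞) (fun p : ℝ × (Fin 3 → ℝ) => ψ p.1 p.2)
    {p : ℝ × (Fin 3 → ℝ) | 0 < p.1}

/-- The unit cube `[0,1]³`, a fundamental domain for `𝕋³`. -/
def cube : Set (Fin 3 → ℝ) := Set.Icc 0 1

/-- The Kasner wave equation `□_g ψ = 0` in coordinates. -/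
def Kasnerwave (p : Fin 3 → ℝ) (ψ : ℝ → (Fin 3 → ℝ) → ℝ) : Prop :=
  ∀ t : ℝ, 0 < t → ∀ x : Fin 3 → ℝ,
    dtd (dtd ψ) t x + t⁻¹ * dtd ψ t x
      - ∑ j : Fin 3, t ^ (-(2 * p j)) * pd j (pd j (ψ t)) x = 0

/-- The weighted energy `E_α(t)` of a solution on Kasner. -/
def EKasner (p : Fin 3 → ℝ) (ψ : ℝ → (Fin 3 → ℝ) → ℝ) (α : Fin 3 → ℕ) (t : ℝ) : ℝ :=
  (1 / 2) * ∫ x in cube,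
    (t ^ 2 * (dtd (fun s => pdMulti α (ψ s)) t x) ^ 2
      + ∑ i : Fin 3, t ^ (2 - 2 * p i) * (pd i (pdMulti α (ψ t)) x) ^ 2)

/-!
Along a solution, the time derivative of the energy density
`t² (∂ₜψ)² + ∑ⱼ t^(2-2pⱼ) (∂ⱼψ)²` is, by the wave equation,
`∑ⱼ (2 - 2pⱼ) t^(1-2pⱼ) (∂ⱼψ)²` plus the spatial divergences `2 t^(2-2pⱼ) ∂ⱼ(∂ₜψ ∂ⱼψ)`.
By periodicity and the divergence theorem the divergences integrate to zero over the unit cube,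
and the remaining term is nonnegative because `pⱼ < 1`; hence the energy is nondecreasing in `t`.
Since the coefficients of the equation depend on `t` only, every spatial derivative `∂^α ψ` is
again a periodic solution, which gives the estimate for all `α`.
-/

open scoped ContDiff

section DirDeriv

variable {E : Type*} [NormedAddCommGroup E] [NormedSpace ℝ E]
  {f g : E → ℝ} {U : Set E} {q : E}

def dirDeriv (w : E) (f : E → ℝ) : E → ℝ := fun q => fderiv ℝ f q w

theorem ContDiffOn.dirDeriv (hf : ContDiffOn ℝ ∞ f U) (hU : IsOpen U) (w : E) :
    ContDiffOn ℝ ∞ (dirDeriv w f) U :=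
  (hf.fderiv_of_isOpen hU le_rfl).clm_apply contDiffOn_const

theorem ContDiffOn.iterate_dirDeriv (hf : ContDiffOn ℝ ∞ f U) (hU : IsOpen U) (w : E) (n : ℕ) :
    ContDiffOn ℝ ∞ ((_root_.dirDeriv w)^[n] f) U := by
  induction n with
  | zero => exact hf
  | succ n ih => rw [Function.iterate_succ_apply']; exact ih.dirDeriv hU w

theorem dirDeriv_comm (hf : ContDiffOn ℝ ∞ f U) (hU : IsOpen U) (hq : q ∈ U) (v w : E) :
    dirDeriv v (dirDeriv w f) q = dirDeriv w (dirDeriv v f) q := by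
  have hfq : ContDiffAt ℝ ∞ f q := hf.contDiffAt (hU.mem_nhds hq)
  have hf' : DifferentiableAt ℝ (fderiv ℝ f) q :=
    (hfq.fderiv_right (m := 1) (WithTop.coe_le_coe.2 le_top)).differentiableAt one_ne_zero
  have second : ∀ a b, dirDeriv a (dirDeriv b f) q = fderiv ℝ (fderiv ℝ f) q a b := fun a b => by
    change fderiv ℝ (fun y => fderiv ℝ f y b) q a = _
    simp [fderiv_clm_apply hf' (differentiableAt_const b)]
  have two_le : minSmoothness ℝ 2 ≤ ∞ := by
    simp only [minSmoothness_of_isRCLikeNormedField]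
    exact ENat.LEInfty.out
  rw [second, second, hfq.isSymmSndFDerivAt two_le]

theorem dirDeriv_congr (hU : IsOpen U) (h : EqOn f g U) (hq : q ∈ U) (w : E) :
    dirDeriv w f q = dirDeriv w g q := by
  simp only [dirDeriv, (Filter.eventuallyEq_of_mem (hU.mem_nhds hq) h).fderiv_eq]

theorem dirDeriv_add_right_of_invariant {c : E} (hU : IsOpen U)
    (h : ∀ y ∈ U, f (y + c) = f y) (hq : q ∈ U) (w : E) :
    dirDeriv w f (q + c) = dirDeriv w f q := by
  simp only [dirDeriv, ← fderiv_comp_add_right]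
  exact dirDeriv_congr hU h hq w

theorem dirDeriv_eq_zero_of_eqOn_zero (hU : IsOpen U) (h : EqOn f 0 U) (hq : q ∈ U) (w : E) :
    dirDeriv w f q = 0 := by
  rw [dirDeriv_congr hU h hq w]
  simp [dirDeriv]

theorem dirDeriv_fun_add (hf : DifferentiableAt ℝ f q) (hg : DifferentiableAt ℝ g q) (w : E) :
    dirDeriv w (fun y => f y + g y) q = dirDeriv w f q + dirDeriv w g q := by
  simp [dirDeriv, fderiv_fun_add hf hg]

theorem dirDeriv_fun_sub (hf : DifferentiableAt ℝ f q) (hg : DifferentiableAt ℝ g q) (w : E) :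
    dirDeriv w (fun y => f y - g y) q = dirDeriv w f q - dirDeriv w g q := by
  simp [dirDeriv, fderiv_fun_sub hf hg]

theorem dirDeriv_fun_mul (hf : DifferentiableAt ℝ f q) (hg : DifferentiableAt ℝ g q) (w : E) :
    dirDeriv w (fun y => f y * g y) q = f q * dirDeriv w g q + g q * dirDeriv w f q := by
  simp [dirDeriv, fderiv_fun_mul hf hg]

theorem dirDeriv_fun_sum {ι : Type*} {s : Finset ι} {F : ι → E → ℝ}
    (hF : ∀ i ∈ s, DifferentiableAt ℝ (F i) q) (w : E) :
    dirDeriv w (fun y => ∑ i ∈ s, F i y) q = ∑ i ∈ s, dirDeriv w (F i) q := by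
  simp [dirDeriv, fderiv_fun_sum hF]

theorem dirDeriv_inr_fst_mul {F : Type*} [NormedAddCommGroup F] [NormedSpace ℝ F]
    {a : E → ℝ} {g : E × F → ℝ} {q : E × F} (ha : DifferentiableAt ℝ a q.1)
    (hg : DifferentiableAt ℝ g q) (v : F) :
    dirDeriv (0, v) (fun y => a y.1 * g y) q = a q.1 * dirDeriv (0, v) g q := by
  have ha' : HasFDerivAt (fun y : E × F => a y.1) ((fderiv ℝ a q.1).comp (.fst ℝ E F)) q :=
    ha.hasFDerivAt.comp q hasFDerivAt_fst
  rw [dirDeriv_fun_mul ha'.differentiableAt hg]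
  simp [dirDeriv, ha'.fderiv]

end DirDeriv

theorem integral_fderiv_single_eq_zero_of_periodic {d : ℕ} {g : (Fin d → ℝ) → ℝ}
    (hg : ContDiff ℝ 1 g) (j : Fin d) (hper : ∀ x, g (x + Pi.single j 1) = g x) :
    ∫ x in Icc (0 : Fin d → ℝ) 1, fderiv ℝ g x (Pi.single j 1) = 0 := by
  obtain ⟨n, rfl⟩ : ∃ n, d = n + 1 := Nat.exists_eq_add_one_of_ne_zero j.pos.ne'
  -- the divergence theorem for the vector field `g • eⱼ`
  set F : Fin (n + 1) → (Fin (n + 1) → ℝ) → ℝ := Pi.single j g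
  set F' : Fin (n + 1) → (Fin (n + 1) → ℝ) → (Fin (n + 1) → ℝ) →L[ℝ] ℝ :=
    Pi.single j (fderiv ℝ g)
  have hdiv : ∀ x, ∑ i, F' i x (Pi.single i 1) = fderiv ℝ g x (Pi.single j 1) := fun x => by
    rw [Fintype.sum_eq_single j fun i hi => by simp [F', Pi.single_eq_of_ne hi]]
    simp [F']
  have hcont : ∀ i, ContinuousOn (F i) (Icc 0 1) := fun i => by
    rcases eq_or_ne i j with rfl | hi
    · simpa [F] using hg.continuous.continuousOn
    · simp only [F, Pi.single_eq_of_ne hi]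
      exact continuousOn_const
  have hderiv : ∀ x i, HasFDerivAt (F i) (F' i x) x := fun x i => by
    rcases eq_or_ne i j with rfl | hi
    · simpa [F, F'] using (hg.differentiable one_ne_zero x).hasFDerivAt
    · simp only [F, F', Pi.single_eq_of_ne hi]
      exact hasFDerivAt_const (0 : ℝ) x
  have hint : IntegrableOn (fun x => fderiv ℝ g x (Pi.single j 1)) (Icc 0 1) :=
    ((hg.continuous_fderiv one_ne_zero).clm_apply continuous_const).integrableOn_Icc
  have hfaces : ∀ i (y : Fin n → ℝ), F i (i.insertNth ((1 : Fin (n + 1) → ℝ) i) y) =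
      F i (i.insertNth ((0 : Fin (n + 1) → ℝ) i) y) := fun i y => by
    rcases eq_or_ne i j with rfl | hi
    · have hshift : (i.insertNth (1 : ℝ) y : Fin (n + 1) → ℝ) = i.insertNth 0 y + Pi.single i 1 :=
        Fin.insertNth_eq_iff.2 ⟨by simp, by ext; simp [Fin.removeNth, Fin.succAbove_ne]⟩
      simp [F, hshift, hper]
    · simp [F, Pi.single_eq_of_ne hi]
  simp_rw [← hdiv]
  rw [integral_divergence_of_hasFDerivAt_off_countable' 0 1 zero_le_one F F' ∅ countable_empty
    hcont (fun x _ i => hderiv x i) (by simpa only [hdiv] using hint)]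
  simp only [hfaces, sub_self, Finset.sum_const_zero]

open Metric in
theorem hasDerivAt_setIntegral_of_continuousOn {X E : Type*} [TopologicalSpace X] [T2Space X]
    [MeasurableSpace X] [OpensMeasurableSpace X] {μ : Measure X} [IsFiniteMeasureOnCompacts μ]
    [NormedAddCommGroup E] [NormedSpace ℝ E] {K : Set X} (hK : IsCompact K)
    {F F' : ℝ → X → E} {s ε : ℝ} (hε : 0 < ε)
    (hF : ContinuousOn (Function.uncurry F) (closedBall s ε ×ˢ K))
    (hF' : ContinuousOn (Function.uncurry F') (closedBall s ε ×ˢ K))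
    (hderiv : ∀ t ∈ ball s ε, ∀ x ∈ K, HasDerivAt (F · x) (F' t x) t) :
    HasDerivAt (fun t => ∫ x in K, F t x ∂μ) (∫ x in K, F' s x ∂μ) s := by
  have slice : ∀ {G : ℝ → X → E}, ContinuousOn (Function.uncurry G) (closedBall s ε ×ˢ K) →
      ∀ t ∈ closedBall s ε, IntegrableOn (G t) K μ := fun hG t ht =>
    (hG.comp (continuousOn_const.prodMk continuousOn_id) fun x hx => ⟨ht, hx⟩).integrableOn_compact
      hK
  obtain ⟨C, hC⟩ := ((isCompact_closedBall s ε).prod hK).exists_bound_of_continuousOn hF'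
  refine (hasDerivAt_integral_of_dominated_loc_of_deriv_le (bound := fun _ => C)
    (ball_mem_nhds s hε) ?_ (slice hF s (mem_closedBall_self hε.le))
    (slice hF' s (mem_closedBall_self hε.le)).aestronglyMeasurable ?_
    (integrableOn_const hK.measure_lt_top.ne) ?_).2
  · filter_upwards [ball_mem_nhds s hε] with t ht
    exact (slice hF t (ball_subset_closedBall ht)).aestronglyMeasurable
  · filter_upwards [ae_restrict_mem hK.measurableSet] with x hx t ht
    exact hC (t, x) ⟨ball_subset_closedBall ht, hx⟩
  · filter_upwards [ae_restrict_mem hK.measurableSet] with x hx t ht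
    exact hderiv t ht x hx

namespace Kasner

variable {d : ℕ}

def spacetime (d : ℕ) : Set (ℝ × (Fin d → ℝ)) := {q | 0 < q.1}

theorem isOpen_spacetime : IsOpen (spacetime d) := isOpen_lt continuous_const continuous_fst

theorem differentiableAt_of_contDiffOn {f : ℝ × (Fin d → ℝ) → ℝ}
    (hf : ContDiffOn ℝ ∞ f (spacetime d)) {q : ℝ × (Fin d → ℝ)} (hq : q ∈ spacetime d) :
    DifferentiableAt ℝ f q :=
  (hf.contDiffAt (isOpen_spacetime.mem_nhds hq)).differentiableAt (by simp)

theorem continuousOn_fst_rpow (r : ℝ) :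
    ContinuousOn (fun q : ℝ × (Fin d → ℝ) => q.1 ^ r) (spacetime d) :=
  continuousOn_fst.rpow_const fun _ hq => Or.inl (ne_of_gt hq)

def timeVec : ℝ × (Fin d → ℝ) := (1, 0)

def spaceVec (j : Fin d) : ℝ × (Fin d → ℝ) := (0, Pi.single j 1)

local notation "∂ₜ" => dirDeriv timeVec
local notation "∂[" j "]" => dirDeriv (spaceVec j)

def waveOp (p : Fin d → ℝ) (v : ℝ × (Fin d → ℝ) → ℝ) (q : ℝ × (Fin d → ℝ)) : ℝ :=
  ∂ₜ (∂ₜ v) q + q.1⁻¹ * ∂ₜ v q - ∑ j, q.1 ^ (-(2 * p j)) * ∂[j] (∂[j] v) q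

structure IsPeriodicSolution (p : Fin d → ℝ) (v : ℝ × (Fin d → ℝ) → ℝ) : Prop where
  contDiffOn : ContDiffOn ℝ ∞ v (spacetime d)
  periodic : ∀ q ∈ spacetime d, ∀ j, v (q + spaceVec j) = v q
  wave : ∀ q ∈ spacetime d, waveOp p v q = 0

section Slices

variable {f : ℝ × (Fin d → ℝ) → ℝ} {t : ℝ} {x : Fin d → ℝ}

theorem hasDerivAt_timeSlice (hf : DifferentiableAt ℝ f (t, x)) :
    HasDerivAt (fun s => f (s, x)) (∂ₜ f (t, x)) t :=
  hf.hasFDerivAt.comp_hasDerivAt t ((hasDerivAt_id t).prodMk (hasDerivAt_const t x))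

theorem deriv_eq_dirDeriv_timeVec (hf : ContDiffOn ℝ ∞ f (spacetime d)) {g : ℝ → ℝ}
    (hg : ∀ s, 0 < s → g s = f (s, x)) (ht : 0 < t) : deriv g t = ∂ₜ f (t, x) := by
  rw [(Filter.eventuallyEq_of_mem (Ioi_mem_nhds ht) hg).deriv_eq]
  exact (hasDerivAt_timeSlice (differentiableAt_of_contDiffOn hf ht)).deriv

theorem hasDerivAt_spaceSlice (hf : DifferentiableAt ℝ f (t, x)) (i : Fin d) :
    HasDerivAt (fun s => f (t, Function.update x i s)) (∂[i] f (t, x)) (x i) := by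
  have hf' : HasFDerivAt f (fderiv ℝ f (t, x)) (t, Function.update x i (x i)) := by
    simpa using hf.hasFDerivAt
  exact hf'.comp_hasDerivAt (x i) ((hasDerivAt_const (x i) t).prodMk (hasDerivAt_update x i (x i)))

theorem fderiv_spaceSlice_single (hf : DifferentiableAt ℝ f (t, x)) (j : Fin d) :
    fderiv ℝ (fun y => f (t, y)) x (Pi.single j 1) = ∂[j] f (t, x) := by
  have h : HasFDerivAt (fun y => f (t, y)) ((fderiv ℝ f (t, x)).comp (.inr ℝ ℝ _)) x :=
    hf.hasFDerivAt.comp x ((hasFDerivAt_const t x).prodMk (hasFDerivAt_id x))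
  simp [h.fderiv, dirDeriv, spaceVec]

theorem contDiff_spaceSlice (hf : ContDiffOn ℝ ∞ f (spacetime d)) (ht : 0 < t) :
    ContDiff ℝ ∞ (fun y => f (t, y)) :=
  contDiff_iff_contDiffAt.2 fun y => (hf.contDiffAt (isOpen_spacetime.mem_nhds ht)).comp y
    (contDiffAt_const.prodMk contDiffAt_id)

theorem integral_spaceDeriv_eq_zero (hf : ContDiffOn ℝ ∞ f (spacetime d)) {j : Fin d}
    (hper : ∀ q ∈ spacetime d, f (q + spaceVec j) = f q) (ht : 0 < t) :
    ∫ x in Icc (0 : Fin d → ℝ) 1, ∂[j] f (t, x) = 0 := by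
  rw [← integral_fderiv_single_eq_zero_of_periodic ((contDiff_spaceSlice hf ht).of_le (by simp)) j
    fun y => by simpa [spaceVec] using hper (t, y) ht]
  exact setIntegral_congr_fun measurableSet_Icc fun y _ =>
    (fderiv_spaceSlice_single (differentiableAt_of_contDiffOn hf ht) j).symm

end Slices

theorem dirDeriv_spaceVec_waveOp {p : Fin d → ℝ} {v : ℝ × (Fin d → ℝ) → ℝ}
    (hv : ContDiffOn ℝ ∞ v (spacetime d)) {q : ℝ × (Fin d → ℝ)} (hq : q ∈ spacetime d)
    (i : Fin d) : ∂[i] (waveOp p v) q = waveOp p (∂[i] v) q := by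
  have hU : IsOpen (spacetime d) := isOpen_spacetime
  have hq0 : q.1 ≠ 0 := ne_of_gt hq
  have d1 : ∀ a, DifferentiableAt ℝ (dirDeriv a v) q := fun a =>
    differentiableAt_of_contDiffOn (hv.dirDeriv hU a) hq
  have d2 : ∀ a b, DifferentiableAt ℝ (dirDeriv b (dirDeriv a v)) q := fun a b =>
    differentiableAt_of_contDiffOn ((hv.dirDeriv hU a).dirDeriv hU b) hq
  have hinv : DifferentiableAt ℝ (fun y : ℝ × (Fin d → ℝ) => y.1⁻¹) q :=
    differentiableAt_fst.fun_inv hq0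
  have hrpow : ∀ r : ℝ, DifferentiableAt ℝ (fun y : ℝ × (Fin d → ℝ) => y.1 ^ r) q := fun r =>
    differentiableAt_fst.rpow_const (Or.inl hq0)
  -- the coefficients depend on `t` only, so `∂ᵢ` passes through them
  have fst_mul : ∀ {a : ℝ → ℝ} {g : ℝ × (Fin d → ℝ) → ℝ}, DifferentiableAt ℝ a q.1 →
      DifferentiableAt ℝ g q → ∂[i] (fun y => a y.1 * g y) q = a q.1 * ∂[i] g q :=
    fun ha hg => dirDeriv_inr_fst_mul ha hg _
  have comm₃ : ∀ a, ∂[i] (dirDeriv a (dirDeriv a v)) q = dirDeriv a (dirDeriv a (∂[i] v)) q :=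
    fun a => by
    rw [dirDeriv_comm (hv.dirDeriv hU a) hU hq,
      dirDeriv_congr hU (fun y hy => dirDeriv_comm hv hU hy _ _) hq]
  unfold waveOp
  rw [dirDeriv_fun_sub ((d2 _ _).fun_add (hinv.fun_mul (d1 _)))
      (DifferentiableAt.fun_sum fun j _ => (hrpow _).fun_mul (d2 _ _)),
    dirDeriv_fun_add (d2 _ _) (hinv.fun_mul (d1 _)),
    dirDeriv_fun_sum fun j _ => (hrpow _).fun_mul (d2 _ _),
    fst_mul (differentiableAt_inv hq0) (d1 _), dirDeriv_comm hv hU hq]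
  simp only [fst_mul (Real.differentiableAt_rpow_const_of_ne _ hq0) (d2 _ _), comm₃]

namespace IsPeriodicSolution

variable {p : Fin d → ℝ} {v : ℝ × (Fin d → ℝ) → ℝ}

theorem spaceDeriv (hv : IsPeriodicSolution p v) (i : Fin d) :
    IsPeriodicSolution p (∂[i] v) where
  contDiffOn := hv.contDiffOn.dirDeriv isOpen_spacetime _
  periodic q hq j :=
    dirDeriv_add_right_of_invariant isOpen_spacetime (fun y hy => hv.periodic y hy j) hq _
  wave q hq := by
    rw [← dirDeriv_spaceVec_waveOp hv.contDiffOn hq]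
    exact dirDeriv_eq_zero_of_eqOn_zero isOpen_spacetime (fun y hy => hv.wave y hy) hq _

theorem iterate_spaceDeriv (hv : IsPeriodicSolution p v) (i : Fin d) (n : ℕ) :
    IsPeriodicSolution p ((∂[i])^[n] v) := by
  induction n with
  | zero => exact hv
  | succ n ih => rw [Function.iterate_succ_apply']; exact ih.spaceDeriv i

end IsPeriodicSolution

def energyDensity (p : Fin d → ℝ) (v : ℝ × (Fin d → ℝ) → ℝ) (q : ℝ × (Fin d → ℝ)) : ℝ :=
  q.1 ^ 2 * ∂ₜ v q ^ 2 + ∑ i, q.1 ^ (2 - 2 * p i) * ∂[i] v q ^ 2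

def energy (p : Fin d → ℝ) (v : ℝ × (Fin d → ℝ) → ℝ) (t : ℝ) : ℝ :=
  ∫ x in Icc (0 : Fin d → ℝ) 1, energyDensity p v (t, x)

/-- The time derivative of `energyDensity` along a solution (`hasDerivAt_energyDensity`):
a term of the sign of `1 - p j` plus spatial divergences, which integrate to zero. -/
def energyRate (p : Fin d → ℝ) (v : ℝ × (Fin d → ℝ) → ℝ) (q : ℝ × (Fin d → ℝ)) : ℝ :=
  ∑ j, ((2 - 2 * p j) * q.1 ^ (1 - 2 * p j) * ∂[j] v q ^ 2
    + 2 * q.1 ^ (2 - 2 * p j) * ∂[j] (fun y => ∂ₜ v y * ∂[j] v y) q)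

theorem continuousOn_energyDensity (p : Fin d → ℝ) {v : ℝ × (Fin d → ℝ) → ℝ}
    (hv : ContDiffOn ℝ ∞ v (spacetime d)) : ContinuousOn (energyDensity p v) (spacetime d) := by
  have h := fun a => (hv.dirDeriv isOpen_spacetime a).continuousOn
  exact ((continuousOn_fst.pow 2).mul ((h _).pow 2)).add
    (continuousOn_finsetSum _ fun i _ => (continuousOn_fst_rpow _).mul ((h _).pow 2))

theorem continuousOn_energyRate (p : Fin d → ℝ) {v : ℝ × (Fin d → ℝ) → ℝ}
    (hv : ContDiffOn ℝ ∞ v (spacetime d)) : ContinuousOn (energyRate p v) (spacetime d) := by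
  have hU : IsOpen (spacetime d) := isOpen_spacetime
  have h := fun a => (hv.dirDeriv hU a).continuousOn
  have hflux := fun j => (((hv.dirDeriv hU timeVec).mul (hv.dirDeriv hU (spaceVec j))).dirDeriv hU
    (spaceVec j)).continuousOn
  exact continuousOn_finsetSum _ fun j _ =>
    ((continuousOn_const.mul (continuousOn_fst_rpow _)).mul ((h _).pow 2)).add
      ((continuousOn_const.mul (continuousOn_fst_rpow _)).mul (hflux j))

namespace IsPeriodicSolution

variable {p : Fin d → ℝ} {v : ℝ × (Fin d → ℝ) → ℝ}

theorem hasDerivAt_energyDensity (hv : IsPeriodicSolution p v) {t : ℝ} (ht : 0 < t)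
    (x : Fin d → ℝ) :
    HasDerivAt (fun s => energyDensity p v (s, x)) (energyRate p v (t, x)) t := by
  have hU : IsOpen (spacetime d) := isOpen_spacetime
  have hq : (t, x) ∈ spacetime d := ht
  have diff : ∀ a, DifferentiableAt ℝ (dirDeriv a v) (t, x) := fun a =>
    differentiableAt_of_contDiffOn (hv.contDiffOn.dirDeriv hU a) hq
  have hraw := ((hasDerivAt_pow 2 t).fun_mul
    ((hasDerivAt_timeSlice (diff timeVec)).fun_pow 2)).fun_add
    (HasDerivAt.fun_sum (u := Finset.univ) fun j _ =>
      (Real.hasDerivAt_rpow_const (p := 2 - 2 * p j) (Or.inl ht.ne')).fun_mul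
      ((hasDerivAt_timeSlice (diff (spaceVec j))).fun_pow 2))
  refine hraw.congr_deriv ?_
  have hwave : ∂ₜ (∂ₜ v) (t, x) =
      ∑ j, t ^ (-(2 * p j)) * ∂[j] (∂[j] v) (t, x) - t⁻¹ * ∂ₜ v (t, x) := by
    have := hv.wave _ hq
    unfold waveOp at this
    linear_combination this
  have hflux : ∀ j, ∂[j] (fun y => ∂ₜ v y * ∂[j] v y) (t, x) =
      ∂ₜ v (t, x) * ∂[j] (∂[j] v) (t, x) + ∂[j] v (t, x) * ∂ₜ (∂[j] v) (t, x) := fun j => by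
    rw [dirDeriv_fun_mul (diff _) (diff _), dirDeriv_comm hv.contDiffOn hU hq (spaceVec j) timeVec]
  have hsplit : ∀ j, t ^ (2 - 2 * p j) = t ^ 2 * t ^ (-(2 * p j)) := fun j => by
    rw [← Real.rpow_two, ← Real.rpow_add ht]
    ring_nf
  have hexp : ∀ j, 2 - 2 * p j - 1 = 1 - 2 * p j := fun j => by ring
  simp only [hwave, hexp, energyRate]
  calc _ = 2 * t ^ 2 * ∂ₜ v (t, x) * ∑ j, t ^ (-(2 * p j)) * ∂[j] (∂[j] v) (t, x) + ∑ j,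
      ((2 - 2 * p j) * t ^ (1 - 2 * p j) * ∂[j] v (t, x) ^ 2 +
        t ^ (2 - 2 * p j) * (2 * ∂[j] v (t, x) * ∂ₜ (∂[j] v) (t, x))) := by
        norm_num
        field_simp
        ring
    _ = _ := by
        rw [Finset.mul_sum, ← Finset.sum_add_distrib]
        refine Finset.sum_congr rfl fun j _ => ?_
        rw [hflux, hsplit]
        ring

theorem hasDerivAt_energy (hv : IsPeriodicSolution p v) {t : ℝ} (ht : 0 < t) :
    HasDerivAt (energy p v) (∫ x in Icc (0 : Fin d → ℝ) 1, energyRate p v (t, x)) t := by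
  have hsub : Metric.closedBall t (t / 2) ×ˢ Icc (0 : Fin d → ℝ) 1 ⊆ spacetime d := by
    rintro q ⟨hq, -⟩
    rw [Real.closedBall_eq_Icc] at hq
    show 0 < q.1
    linarith [hq.1]
  refine hasDerivAt_setIntegral_of_continuousOn (F := fun s x => energyDensity p v (s, x))
    (F' := fun s x => energyRate p v (s, x)) isCompact_Icc (half_pos ht)
    ((continuousOn_energyDensity p hv.contDiffOn).mono hsub)
    ((continuousOn_energyRate p hv.contDiffOn).mono hsub) fun s hs x hx => ?_
  have hs : (s, x) ∈ spacetime d := hsub ⟨Metric.ball_subset_closedBall hs, hx⟩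
  exact hv.hasDerivAt_energyDensity hs x

theorem integral_energyRate_nonneg (hp : ∀ j, p j < 1) (hv : IsPeriodicSolution p v) {t : ℝ}
    (ht : 0 < t) : 0 ≤ ∫ x in Icc (0 : Fin d → ℝ) 1, energyRate p v (t, x) := by
  have hU : IsOpen (spacetime d) := isOpen_spacetime
  have hflux : ∀ j, ContDiffOn ℝ ∞ (fun y => ∂ₜ v y * ∂[j] v y) (spacetime d) := fun j =>
    (hv.contDiffOn.dirDeriv hU _).mul (hv.contDiffOn.dirDeriv hU _)
  have hflux_per : ∀ j, ∀ q ∈ spacetime d,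
      ∂ₜ v (q + spaceVec j) * ∂[j] v (q + spaceVec j) = ∂ₜ v q * ∂[j] v q := fun j q hq => by
    simp only [dirDeriv_add_right_of_invariant hU (fun y hy => hv.periodic y hy j) hq]
  have int : ∀ {w : ℝ × (Fin d → ℝ) → ℝ}, ContDiffOn ℝ ∞ w (spacetime d) → ∀ c : ℝ,
      IntegrableOn (fun x => c * w (t, x)) (Icc 0 1) := fun hw c =>
    ((contDiff_spaceSlice hw ht).continuous.const_mul c).integrableOn_Icc
  have int_sq : ∀ j, IntegrableOn
      (fun x => (2 - 2 * p j) * t ^ (1 - 2 * p j) * ∂[j] v (t, x) ^ 2) (Icc 0 1) := fun j =>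
    int ((hv.contDiffOn.dirDeriv hU _).pow 2) _
  have int_flux : ∀ j, IntegrableOn
      (fun x => 2 * t ^ (2 - 2 * p j) * ∂[j] (fun y => ∂ₜ v y * ∂[j] v y) (t, x)) (Icc 0 1) :=
    fun j => int ((hflux j).dirDeriv hU _) _
  unfold energyRate
  rw [integral_finsetSum _ fun j _ => ?_]
  · refine Finset.sum_nonneg fun j _ => ?_
    rw [integral_add (int_sq j) (int_flux j), integral_const_mul (2 * t ^ (2 - 2 * p j)),
      integral_spaceDeriv_eq_zero (hflux j) (hflux_per j) ht, mul_zero, add_zero]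
    refine setIntegral_nonneg measurableSet_Icc fun x _ => ?_
    have := hp j
    exact mul_nonneg (mul_nonneg (by linarith) (Real.rpow_nonneg ht.le _)) (sq_nonneg _)
  · exact (int_sq j).add (int_flux j)

theorem energy_monotoneOn (hp : ∀ j, p j < 1) (hv : IsPeriodicSolution p v) :
    MonotoneOn (energy p v) (Ioi 0) := by
  have hderiv : ∀ t ∈ Ioi (0 : ℝ), HasDerivAt (energy p v) _ t := fun t ht =>
    hv.hasDerivAt_energy ht
  refine monotoneOn_of_hasDerivWithinAt_nonneg (convex_Ioi 0)
    (f' := fun t => ∫ x in Icc (0 : Fin d → ℝ) 1, energyRate p v (t, x))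
    (fun t ht => (hderiv t ht).continuousAt.continuousWithinAt) (fun t ht => ?_) fun t ht => ?_
  · rw [interior_Ioi] at ht ⊢
    exact (hderiv t ht).hasDerivWithinAt
  · exact hv.integral_energyRate_nonneg hp (by simpa using ht)

end IsPeriodicSolution

def spaceDerivMulti (α : Fin 3 → ℕ) (f : ℝ × (Fin 3 → ℝ) → ℝ) : ℝ × (Fin 3 → ℝ) → ℝ :=
  (∂[0])^[α 0] ((∂[1])^[α 1] ((∂[2])^[α 2] f))

theorem IsPeriodicSolution.spaceDerivMulti {p : Fin 3 → ℝ} {v : ℝ × (Fin 3 → ℝ) → ℝ}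
    (hv : IsPeriodicSolution p v) (α : Fin 3 → ℕ) : IsPeriodicSolution p (spaceDerivMulti α v) :=
  ((hv.iterate_spaceDeriv 2 _).iterate_spaceDeriv 1 _).iterate_spaceDeriv 0 _

section Coordinates

variable {f : ℝ × (Fin 3 → ℝ) → ℝ} {t : ℝ}

theorem pd_spaceSlice {x : Fin 3 → ℝ} (hf : DifferentiableAt ℝ f (t, x)) (i : Fin 3) :
    pd i (fun y => f (t, y)) x = ∂[i] f (t, x) :=
  (hasDerivAt_spaceSlice hf i).deriv

theorem iterate_pd_spaceSlice (hf : ContDiffOn ℝ ∞ f (spacetime 3)) (ht : 0 < t) (i : Fin 3)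
    (n : ℕ) : (pd i)^[n] (fun y => f (t, y)) = fun y => ((∂[i])^[n] f) (t, y) := by
  induction n with
  | zero => rfl
  | succ n ih =>
    simp only [Function.iterate_succ_apply', ih]
    funext y
    exact pd_spaceSlice
      (differentiableAt_of_contDiffOn (hf.iterate_dirDeriv isOpen_spacetime _ n) ht) i

theorem pdMulti_spaceSlice (hf : ContDiffOn ℝ ∞ f (spacetime 3)) (ht : 0 < t) (α : Fin 3 → ℕ) :
    pdMulti α (fun y => f (t, y)) = fun y => spaceDerivMulti α f (t, y) := by
  have hU : IsOpen (spacetime 3) := isOpen_spacetime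
  rw [pdMulti, iterate_pd_spaceSlice hf ht, iterate_pd_spaceSlice (hf.iterate_dirDeriv hU _ _) ht,
    iterate_pd_spaceSlice ((hf.iterate_dirDeriv hU _ _).iterate_dirDeriv hU _ _) ht]
  rfl

end Coordinates

theorem isPeriodicSolution_uncurry {p : Fin 3 → ℝ} {ψ : ℝ → (Fin 3 → ℝ) → ℝ}
    (hsmooth : SmoothOnPos ψ) (hper : ∀ t : ℝ, 0 < t → ZPeriodic (ψ t))
    (hwave : Kasnerwave p ψ) : IsPeriodicSolution p (Function.uncurry ψ) where
  contDiffOn := hsmooth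
  periodic := by
    rintro ⟨t, x⟩ ht j
    have hk : (fun i => ((Pi.single j 1 : Fin 3 → ℤ) i : ℝ)) = Pi.single j 1 := by
      ext i
      simp [Pi.single_apply]
    have := hper t ht x (Pi.single j 1)
    rw [hk] at this
    simpa [spaceVec] using this
  wave := by
    rintro ⟨t, x⟩ ht
    have hU : IsOpen (spacetime 3) := isOpen_spacetime
    have hdt : ∀ s, 0 < s → ∀ y, dtd ψ s y = ∂ₜ (Function.uncurry ψ) (s, y) := fun s hs y =>
      deriv_eq_dirDeriv_timeVec hsmooth (fun _ _ => rfl) hs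
    have hdtt : dtd (dtd ψ) t x = ∂ₜ (∂ₜ (Function.uncurry ψ)) (t, x) :=
      deriv_eq_dirDeriv_timeVec (hsmooth.dirDeriv hU _) (fun s hs => hdt s hs x) ht
    have hpd : ∀ j, pd j (ψ t) = fun y => ∂[j] (Function.uncurry ψ) (t, y) := fun j => by
      funext y
      exact pd_spaceSlice (differentiableAt_of_contDiffOn hsmooth (show 0 < t from ht)) j
    have hpdpd : ∀ j, pd j (pd j (ψ t)) x = ∂[j] (∂[j] (Function.uncurry ψ)) (t, x) :=
      fun j => by
      rw [hpd]
      exact pd_spaceSlice (differentiableAt_of_contDiffOn (hsmooth.dirDeriv hU _) ht) j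
    have := hwave t ht x
    rw [hdtt, hdt t ht x] at this
    simp only [hpdpd] at this
    exact this

theorem EKasner_eq_half_energy {p : Fin 3 → ℝ} {ψ : ℝ → (Fin 3 → ℝ) → ℝ}
    (hsmooth : SmoothOnPos ψ) (α : Fin 3 → ℕ) {t : ℝ} (ht : 0 < t) :
    EKasner p ψ α t = 1 / 2 * energy p (spaceDerivMulti α (Function.uncurry ψ)) t := by
  have hU : IsOpen (spacetime 3) := isOpen_spacetime
  set W := spaceDerivMulti α (Function.uncurry ψ)
  have hW : ContDiffOn ℝ ∞ W (spacetime 3) :=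
    ((hsmooth.iterate_dirDeriv hU _ _).iterate_dirDeriv hU _ _).iterate_dirDeriv hU _ _
  have hslice : ∀ s, 0 < s → pdMulti α (ψ s) = fun y => W (s, y) := fun s hs =>
    pdMulti_spaceSlice hsmooth hs α
  have hdt : ∀ x, dtd (fun s => pdMulti α (ψ s)) t x = ∂ₜ W (t, x) := fun x =>
    deriv_eq_dirDeriv_timeVec hW (fun s hs => congrFun (hslice s hs) x) ht
  unfold EKasner energy energyDensity
  congr 1
  refine setIntegral_congr_fun measurableSet_Icc fun x _ => ?_
  simp only [hdt, hslice t ht, pd_spaceSlice (differentiableAt_of_contDiffOn hW ht)]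

end Kasner

theorem kasner_energy_estimate_general
    (p : Fin 3 → ℝ)
    (hp3 : ∀ j : Fin 3, p j < 1)
    (t₀ : ℝ)
    (ψ : ℝ → (Fin 3 → ℝ) → ℝ)
    (hsmooth : SmoothOnPos ψ)
    (hper : ∀ t : ℝ, 0 < t → ZPeriodic (ψ t))
    (hwave : Kasnerwave p ψ) :
    ∀ α : Fin 3 → ℕ, ∀ t ∈ Set.Ioc (0 : ℝ) t₀, EKasner p ψ α t ≤ EKasner p ψ α t₀ := by
  rintro α t ⟨ht, htt₀⟩
  have hsol := (Kasner.isPeriodicSolution_uncurry hsmooth hper hwave).spaceDerivMulti α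
  rw [Kasner.EKasner_eq_half_energy hsmooth α ht,
    Kasner.EKasner_eq_half_energy hsmooth α (ht.trans_le htt₀)]
  exact mul_le_mul_of_nonneg_left (hsol.energy_monotoneOn hp3 ht (ht.trans_le htt₀) htt₀)
    (by norm_num)

/-- **Proposition 3, energy estimate (Kasner).** The weighted energies are monotone:
`E_α(t) ≤ E_α(t₀)` for all `0 < t ≤ t₀` and every multi-index `α`. -/
theorem kasner_energy_estimate
    (p : Fin 3 → ℝ) (hp1 : ∑ j : Fin 3, p j = 1) (hp2 : ∑ j : Fin 3, (p j) ^ 2 = 1)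
    (hp3 : ∀ j : Fin 3, p j < 1)
    (t₀ : ℝ) (ht₀ : 0 < t₀)
    (ψ : ℝ → (Fin 3 → ℝ) → ℝ)
    (hsmooth : SmoothOnPos ψ)
    (hper : ∀ t : ℝ, 0 < t → ZPeriodic (ψ t))
    (hwave : Kasnerwave p ψ) :
    ∀ α : Fin 3 → ℕ, ∀ t ∈ Set.Ioc (0 : ℝ) t₀, EKasner p ψ α t ≤ EKasner p ψ α t₀ :=
  kasner_energy_estimate_general p hp3 t₀ ψ hsmooth hper hwave
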